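/- Let j be a positive integer and s_1, a_1, s_2, a_2 integers such that for all integers n, C(n) = C(n - s_1 - C(n - a_1)) + C(n - s_2 - C(n - a_2)). Then j divides s_1 and s_2, a_1 \equiv j (mod 2j), a_2 \equiv j (mod 2j), and 2(s_1 + s_2) = a_1 + a_2. -/

import Mathlib

/-!
Writing `n = 2jq + r` with `0 ≤ r < 2j` gives `C(n) = jq + min(r, j)`. Hence
`C(n + 2j) = C(n) + j`, `C(n) + C(n - j) = n`, `C` is surjective, and the defect
`E(n) = 2C(n) - n` lies in `[0, j]` and vanishes exactly when `2j ∣ n`.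

Comparing the recurrence at `n` and `n + 2j` and using `C(x) + C(x - j) = x` linearises it:
`2C(n) = (n - s₁ - C(n - a₁)) + (n - s₂ - C(n - a₂)) + j`, i.e.
`2E(n) + E(n - a₁) + E(n - a₂)` is constant. At `n = 0` and `n = j`, where `E` takes its extreme
values `0` and `j`, this forces the constant to be `2j`, `E(j - aᵢ) = 0` (so `aᵢ ≡ j mod 2j`)
and `2(s₁ + s₂) = a₁ + a₂`.

Then `C(n - aᵢ) = n - C(n) - jtᵢ` where `aᵢ = j + 2jtᵢ`, and by surjectivity of `C` the
recurrence becomes `C(m - u₁) + C(m - u₂) = m` with `uᵢ = sᵢ - jtᵢ` and `u₁ + u₂ = j`. At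
`m = u₁` this reads `2C(2u₁ - 2j) = 2u₁ - 2j`, so `2j ∣ 2u₁ - 2j` and `j ∣ u₁`; likewise `j ∣ u₂`.
-/

def C (j : ℕ) (n : ℤ) : ℤ := ∑ i ∈ Finset.range j, ⌈((n : ℚ) - i) / (2 * j)⌉

theorem Int.ceil_intCast_div_eq_iff {K : Type*} [Field K] [LinearOrder K]
    [IsStrictOrderedRing K] [FloorRing K] {a b c : ℤ} (hb : 0 < b) :
    ⌈(a : K) / b⌉ = c ↔ (c - 1) * b < a ∧ a ≤ c * b := by
  have hb' : (0 : K) < b := by exact_mod_cast hb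
  rw [Int.ceil_eq_iff, lt_div_iff₀ hb', div_le_iff₀ hb']
  norm_cast

theorem Int.ceil_sub_div_eq {m : ℤ} (hm : 0 < m) (n i : ℤ) (hi₀ : 0 ≤ i) (hi : i < m) :
    ⌈((n - i : ℤ) : ℚ) / m⌉ = n / m + if i < n % m then 1 else 0 := by
  rw [Int.ceil_intCast_div_eq_iff hm]
  have hn := Int.mul_ediv_add_emod n m
  have hr₀ := Int.emod_nonneg n hm.ne'
  have hr := Int.emod_lt_of_pos n hm
  split_ifs <;> constructor <;> linarith

theorem Int.exists_mul_add_eq {b : ℤ} (hb : 0 < b) (n : ℤ) :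
    ∃ q r, 0 ≤ r ∧ r < b ∧ b * q + r = n :=
  ⟨n / b, n % b, Int.emod_nonneg n hb.ne', Int.emod_lt_of_pos n hb, Int.mul_ediv_add_emod n b⟩

theorem Finset.sum_range_ite_lt (k : ℕ) {r : ℤ} (hr : 0 ≤ r) :
    ∑ i ∈ Finset.range k, (if (i : ℤ) < r then 1 else 0 : ℤ) = min r k := by
  induction k with
  | zero => simpa using hr
  | succ k ih =>
    rw [Finset.sum_range_succ, ih]
    push_cast
    split_ifs <;> omega

def SolvesNestedRecurrence (R : ℤ → ℤ) (s₁ a₁ s₂ a₂ : ℤ) : Prop :=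
  ∀ n, R n = R (n - s₁ - R (n - a₁)) + R (n - s₂ - R (n - a₂))

section C

variable {j : ℕ}

theorem C_eq_mul_ediv_add_min (hj : 0 < j) (n : ℤ) :
    C j n = j * (n / (2 * j)) + min (n % (2 * j)) j := by
  have hm : (0 : ℤ) < 2 * j := by positivity
  have hterm : ∀ i ∈ Finset.range j, ⌈((n : ℚ) - i) / (2 * j)⌉ =
      n / (2 * j) + if (i : ℤ) < n % (2 * j) then 1 else 0 := by
    intro i hi
    have hij : (i : ℤ) < j := by exact_mod_cast Finset.mem_range.mp hi
    exact_mod_cast Int.ceil_sub_div_eq hm n i (by positivity) (by omega)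
  rw [C, Finset.sum_congr rfl hterm, Finset.sum_add_distrib, Finset.sum_const,
    Finset.card_range, Finset.sum_range_ite_lt _ (Int.emod_nonneg n hm.ne'), nsmul_eq_mul]

theorem C_two_mul_mul_add (hj : 0 < j) {q r : ℤ} (hr₀ : 0 ≤ r) (hr : r < 2 * j) :
    C j (2 * j * q + r) = j * q + min r j := by
  have hm : (0 : ℤ) < 2 * j := by positivity
  obtain ⟨hq, hr'⟩ := (Int.ediv_emod_unique hm).mpr ⟨add_comm _ _, hr₀, hr⟩
  rw [C_eq_mul_ediv_add_min hj, hq, hr']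

theorem C_zero (hj : 0 < j) : C j 0 = 0 := by
  simpa using C_two_mul_mul_add hj (q := 0) le_rfl (by positivity)

theorem C_add_two_mul_mul (hj : 0 < j) (n t : ℤ) : C j (n + 2 * j * t) = C j n + j * t := by
  obtain ⟨q, r, hr₀, hr, rfl⟩ := Int.exists_mul_add_eq (by positivity : (0 : ℤ) < 2 * j) n
  rw [show 2 * j * q + r + 2 * j * t = 2 * j * (q + t) + r by ring,
    C_two_mul_mul_add hj hr₀ hr, C_two_mul_mul_add hj hr₀ hr]
  ring

theorem C_add_C_sub (hj : 0 < j) (n : ℤ) : C j n + C j (n - j) = n := by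
  obtain ⟨q, r, hr₀, hr, rfl⟩ := Int.exists_mul_add_eq (by positivity : (0 : ℤ) < 2 * j) n
  rw [C_two_mul_mul_add hj hr₀ hr]
  rcases lt_or_ge r j with hrj | hrj
  · rw [show 2 * j * q + r - j = 2 * j * (q - 1) + (r + j) by ring,
      C_two_mul_mul_add hj (by omega) (by omega), min_eq_left hrj.le, min_eq_right (by omega)]
    ring
  · rw [show 2 * j * q + r - j = 2 * j * q + (r - j) by ring,
      C_two_mul_mul_add hj (by omega) (by omega), min_eq_right hrj, min_eq_left (by omega)]
    ring

theorem C_natCast_self (hj : 0 < j) : C j j = j := by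
  simpa [C_zero hj] using C_add_C_sub hj j

theorem C_surjective (hj : 0 < j) : Function.Surjective (C j) := by
  intro m
  obtain ⟨q, r, hr₀, hr, rfl⟩ := Int.exists_mul_add_eq (by positivity : (0 : ℤ) < j) m
  refine ⟨2 * j * q + r, ?_⟩
  rw [C_two_mul_mul_add hj hr₀ (by omega), min_eq_left hr.le]

theorem two_mul_C_mem_Icc (hj : 0 < j) (n : ℤ) : 2 * C j n ∈ Set.Icc n (n + j) := by
  obtain ⟨q, r, hr₀, hr, rfl⟩ := Int.exists_mul_add_eq (by positivity : (0 : ℤ) < 2 * j) n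
  rw [Set.mem_Icc, C_two_mul_mul_add hj hr₀ hr]
  have := mul_assoc (2 : ℤ) j q
  omega

theorem two_mul_C_eq_self_iff (hj : 0 < j) (n : ℤ) : 2 * C j n = n ↔ 2 * (j : ℤ) ∣ n := by
  obtain ⟨q, r, hr₀, hr, rfl⟩ := Int.exists_mul_add_eq (by positivity : (0 : ℤ) < 2 * j) n
  rw [C_two_mul_mul_add hj hr₀ hr, dvd_add_right (dvd_mul_right _ q)]
  have := mul_assoc (2 : ℤ) j q
  constructor
  · intro h
    rw [show r = 0 by omega]
    exact dvd_zero _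
  · intro h
    rw [Int.eq_zero_of_dvd_of_nonneg_of_lt hr₀ hr h]
    omega

theorem C_sub_add_two_mul_mul (hj : 0 < j) (n t : ℤ) :
    C j (n - (j + 2 * j * t)) = n - C j n - j * t := by
  rw [show n - (j + 2 * j * t) = n - j + 2 * j * (-t) by ring, C_add_two_mul_mul hj]
  linarith [C_add_C_sub hj n]

theorem dvd_of_forall_C_sub_add_C_sub (hj : 0 < j) {u₁ u₂ : ℤ} (hu : u₁ + u₂ = j)
    (h : ∀ m, C j (m - u₁) + C j (m - u₂) = m) : (j : ℤ) ∣ u₁ := by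
  have h₁ := h u₁
  rw [sub_self, C_zero hj, show u₁ - u₂ = 2 * u₁ - j by omega, zero_add] at h₁
  have h₂ := C_add_C_sub hj (2 * u₁ - j)
  have h₃ : 2 * C j (2 * u₁ - j - j) = 2 * u₁ - j - j := by linarith
  obtain ⟨c, hc⟩ := (two_mul_C_eq_self_iff hj _).mp h₃
  exact ⟨c + 1, by linarith⟩

end C

namespace SolvesNestedRecurrence

variable {j : ℕ} {s₁ a₁ s₂ a₂ : ℤ}

theorem two_mul_C_eq (hj : 0 < j) (h : SolvesNestedRecurrence (C j) s₁ a₁ s₂ a₂) (n : ℤ) :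
    2 * C j n = (n - s₁ - C j (n - a₁)) + (n - s₂ - C j (n - a₂)) + j := by
  have hshift : ∀ x : ℤ, C j (x + 2 * j) = C j x + j := fun x => by
    simpa using C_add_two_mul_mul hj x 1
  have h₂ : C j n + j = C j (n - s₁ - C j (n - a₁) + j) + C j (n - s₂ - C j (n - a₂) + j) := by
    rw [← hshift, h, show n + 2 * j - a₁ = n - a₁ + 2 * j by ring,
      show n + 2 * j - a₂ = n - a₂ + 2 * j by ring, hshift, hshift]
    congr 2 <;> ring
  have h₁ := C_add_C_sub hj (n - s₁ - C j (n - a₁) + j)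
  have h₃ := C_add_C_sub hj (n - s₂ - C j (n - a₂) + j)
  rw [add_sub_cancel_right] at h₁ h₃
  linarith [h n]

theorem two_mul_add_eq_and_modEq (hj : 0 < j) (h : SolvesNestedRecurrence (C j) s₁ a₁ s₂ a₂) :
    2 * (s₁ + s₂) = a₁ + a₂ ∧ a₁ ≡ j [ZMOD 2 * j] ∧ a₂ ≡ j [ZMOD 2 * j] := by
  have at_zero := h.two_mul_C_eq hj 0
  have at_self := h.two_mul_C_eq hj j
  rw [C_zero hj] at at_zero
  rw [C_natCast_self hj] at at_self
  obtain ⟨b₁, b₁'⟩ := two_mul_C_mem_Icc hj (0 - a₁)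
  obtain ⟨b₂, b₂'⟩ := two_mul_C_mem_Icc hj (0 - a₂)
  obtain ⟨b₃, b₃'⟩ := two_mul_C_mem_Icc hj (j - a₁)
  obtain ⟨b₄, b₄'⟩ := two_mul_C_mem_Icc hj (j - a₂)
  have e₁ : 2 * C j (j - a₁) = j - a₁ := by linarith
  have e₂ : 2 * C j (j - a₂) = j - a₂ := by linarith
  exact ⟨by linarith, Int.modEq_iff_dvd.mpr ((two_mul_C_eq_self_iff hj _).mp e₁),
    Int.modEq_iff_dvd.mpr ((two_mul_C_eq_self_iff hj _).mp e₂)⟩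

theorem C_sub_add_C_sub (hj : 0 < j) (h : SolvesNestedRecurrence (C j) s₁ a₁ s₂ a₂)
    {t₁ t₂ : ℤ} (ht₁ : a₁ = j + 2 * j * t₁) (ht₂ : a₂ = j + 2 * j * t₂) (m : ℤ) :
    C j (m - (s₁ - j * t₁)) + C j (m - (s₂ - j * t₂)) = m := by
  obtain ⟨n, rfl⟩ := C_surjective hj m
  have hn := h n
  rw [ht₁, ht₂, C_sub_add_two_mul_mul hj, C_sub_add_two_mul_mul hj,
    show n - s₁ - (n - C j n - j * t₁) = C j n - (s₁ - j * t₁) by ring,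
    show n - s₂ - (n - C j n - j * t₂) = C j n - (s₂ - j * t₂) by ring] at hn
  exact hn.symm

end SolvesNestedRecurrence

theorem stmt15 (j : ℕ) (hj : 0 < j) (s₁ a₁ s₂ a₂ : ℤ)
    (h : ∀ n : ℤ, C j n = C j (n - s₁ - C j (n - a₁)) + C j (n - s₂ - C j (n - a₂))) :
    (j : ℤ) ∣ s₁ ∧ (j : ℤ) ∣ s₂ ∧ a₁ % (2 * j) = (j : ℤ) % (2 * j) ∧
      a₂ % (2 * j) = (j : ℤ) % (2 * j) ∧ 2 * (s₁ + s₂) = a₁ + a₂ := by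
  obtain ⟨hsum, ha₁, ha₂⟩ := SolvesNestedRecurrence.two_mul_add_eq_and_modEq hj h
  obtain ⟨t₁, ht₁⟩ := ha₁.symm.dvd
  obtain ⟨t₂, ht₂⟩ := ha₂.symm.dvd
  have hm := SolvesNestedRecurrence.C_sub_add_C_sub hj h (t₁ := t₁) (t₂ := t₂)
    (by linarith) (by linarith)
  have hu : (s₁ - j * t₁) + (s₂ - j * t₂) = j := by linarith
  have hd₁ := dvd_of_forall_C_sub_add_C_sub hj hu hm
  have hd₂ := dvd_of_forall_C_sub_add_C_sub hj (u₁ := s₂ - j * t₂) (u₂ := s₁ - j * t₁)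
    (by linarith) fun m => by linarith [hm m]
  refine ⟨?_, ?_, ha₁, ha₂, hsum⟩
  · simpa using hd₁.add (dvd_mul_right (j : ℤ) t₁)
  · simpa using hd₂.add (dvd_mul_right (j : ℤ) t₂)
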